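/- Let Γ be a group, R a Γ-graded ring, and 𝒜 a proper gr-matrix ideal of R. Define the radical √𝒜 = {A ∈ 𝔐(R) : the diagonal sum of r copies of A belongs to 𝒜 for some integer r ≥ 1}. Then √𝒜 equals the intersection of all gr-prime matrix ideals of R that contain 𝒜. -/

import Mathlib

open Matrix

universe u v w

section GradedDefs

variable {Γ : Type u} [Group Γ] {R : Type v} [Ring R]

/-- `A` is a homogeneous matrix of distribution `(α, β)`:
its `(i,j)` entry lies in `𝒜 (α i * (β j)⁻¹)`. -/
def IsHomog (𝒜 : Γ → AddSubgroup R) {m n : ℕ}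
    (A : Matrix (Fin m) (Fin n) R) (α : Fin m → Γ) (β : Fin n → Γ) : Prop :=
  ∀ i j, A i j ∈ 𝒜 (α i * (β j)⁻¹)

/-- `A` is a homogeneous matrix for some distribution. -/
def IsHomogSq (𝒜 : Γ → AddSubgroup R) {m n : ℕ}
    (A : Matrix (Fin m) (Fin n) R) : Prop :=
  ∃ (α : Fin m → Γ) (β : Fin n → Γ), IsHomog 𝒜 A α β

end GradedDefs

/-- Square matrices over `R` of arbitrary finite size. -/
abbrev SqMat (R : Type v) : Type v := Σ n : ℕ, Matrix (Fin n) (Fin n) R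

section GradedDefs

variable {Γ : Type u} [Group Γ] {R : Type v} [Ring R]

/-- Diagonal sum `A ⊕ B` of two (rectangular) matrices. -/
def diagSum {m n m' n' : ℕ} (A : Matrix (Fin m) (Fin n) R)
    (B : Matrix (Fin m') (Fin n') R) : Matrix (Fin (m + m')) (Fin (n + n')) R :=
  Matrix.reindex finSumFinEquiv finSumFinEquiv (Matrix.fromBlocks A 0 0 B)

/-- Block lower triangular matrix `[[A, 0], [C, B]]`. -/
def lowerBlockSum {n m : ℕ} (A : Matrix (Fin n) (Fin n) R) (B : Matrix (Fin m) (Fin m) R)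
    (C : Matrix (Fin m) (Fin n) R) : Matrix (Fin (n + m)) (Fin (n + m)) R :=
  Matrix.reindex finSumFinEquiv finSumFinEquiv (Matrix.fromBlocks A 0 C B)

/-- Block upper triangular matrix `[[A, C], [0, B]]` with rectangular blocks. -/
def upperBlockSum {m n m' n' : ℕ} (A : Matrix (Fin m) (Fin n) R)
    (B : Matrix (Fin m') (Fin n') R) (C : Matrix (Fin m) (Fin n') R) :
    Matrix (Fin (m + m')) (Fin (n + n')) R :=
  Matrix.reindex finSumFinEquiv finSumFinEquiv (Matrix.fromBlocks A C 0 B)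

/-- `C` is the determinantal sum of `A` and `B` with respect to some column or row:
`A` and `B` agree away from that column (row) and the distinguished column (row) of `C`
is the sum of the corresponding columns (rows) of `A` and `B`. -/
def IsDetSum {n : ℕ} (A B C : Matrix (Fin n) (Fin n) R) : Prop :=
  (∃ c : Fin n, (∀ i j, j ≠ c → A i j = B i j) ∧
      ∀ i j, C i j = if j = c then A i j + B i j else A i j) ∨
  (∃ r : Fin n, (∀ i j, i ≠ r → A i j = B i j) ∧
      ∀ i j, C i j = if i = r then A i j + B i j else A i j)

/-- `C` is the determinantal sum of the homogeneous matrices `A` and `B`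
(which have a common distribution). -/
def GrDetSum (𝒜 : Γ → AddSubgroup R) {n : ℕ} (A B C : Matrix (Fin n) (Fin n) R) : Prop :=
  (∃ α β : Fin n → Γ, IsHomog 𝒜 A α β ∧ IsHomog 𝒜 B α β) ∧ IsDetSum A B C

/-- A square homogeneous matrix `A` is gr-full if whenever `A = P * Q` with `P`
homogeneous of distribution `(α, lam)` and `Q` homogeneous of distribution `(lam, β)`
where `lam` has length `r`, then `r ≥ n`. -/
def IsGrFull (𝒜 : Γ → AddSubgroup R) {n : ℕ} (A : Matrix (Fin n) (Fin n) R) : Prop :=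
  ∀ (r : ℕ) (P : Matrix (Fin n) (Fin r) R) (Q : Matrix (Fin r) (Fin n) R)
    (α : Fin n → Γ) (lam : Fin r → Γ) (β : Fin n → Γ),
    IsHomog 𝒜 P α lam → IsHomog 𝒜 Q lam β → A = P * Q → n ≤ r

/-- gr-prime matrix ideal: a set of square homogeneous matrices satisfying (PM1)–(PM6). -/
structure IsGrPrimeMatrixIdeal (𝒜 : Γ → AddSubgroup R) (P : Set (SqMat R)) : Prop where
  subset_homog : ∀ p ∈ P, IsHomogSq 𝒜 p.2
  pm1 : ∀ {n : ℕ} (A : Matrix (Fin n) (Fin n) R),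
    IsHomogSq 𝒜 A → ¬ IsGrFull 𝒜 A → (⟨n, A⟩ : SqMat R) ∈ P
  pm2 : ∀ {n : ℕ} (A B C : Matrix (Fin n) (Fin n) R),
    (⟨n, A⟩ : SqMat R) ∈ P → (⟨n, B⟩ : SqMat R) ∈ P → GrDetSum 𝒜 A B C →
    (⟨n, C⟩ : SqMat R) ∈ P
  pm3 : ∀ {m n : ℕ} (A : Matrix (Fin m) (Fin m) R) (B : Matrix (Fin n) (Fin n) R),
    (⟨m, A⟩ : SqMat R) ∈ P → IsHomogSq 𝒜 B → (⟨m + n, diagSum A B⟩ : SqMat R) ∈ P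
  pm4 : ∀ {m n : ℕ} (A : Matrix (Fin m) (Fin m) R) (B : Matrix (Fin n) (Fin n) R),
    IsHomogSq 𝒜 A → IsHomogSq 𝒜 B → (⟨m + n, diagSum A B⟩ : SqMat R) ∈ P →
    (⟨m, A⟩ : SqMat R) ∈ P ∨ (⟨n, B⟩ : SqMat R) ∈ P
  pm5 : (⟨1, (1 : Matrix (Fin 1) (Fin 1) R)⟩ : SqMat R) ∉ P
  pm6 : ∀ {n : ℕ} (A : Matrix (Fin n) (Fin n) R) (e f : Equiv.Perm (Fin n)),
    (⟨n, A⟩ : SqMat R) ∈ P → (⟨n, A.submatrix ⇑e ⇑f⟩ : SqMat R) ∈ P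

/-- gr-matrix ideal: a set of square homogeneous matrices satisfying (I1)–(I5). -/
structure IsGrMatrixIdeal (𝒜 : Γ → AddSubgroup R) (I : Set (SqMat R)) : Prop where
  subset_homog : ∀ p ∈ I, IsHomogSq 𝒜 p.2
  i1 : ∀ {n : ℕ} (A : Matrix (Fin n) (Fin n) R),
    IsHomogSq 𝒜 A → ¬ IsGrFull 𝒜 A → (⟨n, A⟩ : SqMat R) ∈ I
  i2 : ∀ {n : ℕ} (A B C : Matrix (Fin n) (Fin n) R),
    (⟨n, A⟩ : SqMat R) ∈ I → (⟨n, B⟩ : SqMat R) ∈ I → GrDetSum 𝒜 A B C →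
    (⟨n, C⟩ : SqMat R) ∈ I
  i3 : ∀ {m n : ℕ} (A : Matrix (Fin m) (Fin m) R) (B : Matrix (Fin n) (Fin n) R),
    (⟨m, A⟩ : SqMat R) ∈ I → IsHomogSq 𝒜 B → (⟨m + n, diagSum A B⟩ : SqMat R) ∈ I
  i4 : ∀ {n : ℕ} (A : Matrix (Fin n) (Fin n) R) (e f : Equiv.Perm (Fin n)),
    (⟨n, A⟩ : SqMat R) ∈ I → (⟨n, A.submatrix ⇑e ⇑f⟩ : SqMat R) ∈ I
  i5 : ∀ {n : ℕ} (A : Matrix (Fin n) (Fin n) R),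
    (⟨n + 1, diagSum A (1 : Matrix (Fin 1) (Fin 1) R)⟩ : SqMat R) ∈ I →
    (⟨n, A⟩ : SqMat R) ∈ I

/-- The diagonal sum of `r` copies of `A`. -/
def diagIter {n : ℕ} (A : Matrix (Fin n) (Fin n) R) :
    (r : ℕ) → Matrix (Fin (n * r)) (Fin (n * r)) R
  | 0 => 0
  | r + 1 => diagSum (diagIter A r) A

/-- Iterated determinantal sums (with arbitrary bracketing) of elements of `W`. -/
inductive IsDetSumOf (𝒜 : Γ → AddSubgroup R) (W : Set (SqMat R)) : SqMat R → Prop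
  | base (p : SqMat R) (hp : p ∈ W) : IsDetSumOf 𝒜 W p
  | step {n : ℕ} (A B C : Matrix (Fin n) (Fin n) R)
      (hA : IsDetSumOf 𝒜 W ⟨n, A⟩) (hB : IsDetSumOf 𝒜 W ⟨n, B⟩)
      (h : GrDetSum 𝒜 A B C) : IsDetSumOf 𝒜 W ⟨n, C⟩

/-- The homogeneous rational closure of degree `γ`: entries `(j,i)` of inverses of matrices
`A^f` with `A ∈ Sig` homogeneous of distribution `(α, β)` and `β j * (α i)⁻¹ = γ`. -/
def RatCl (𝒜 : Γ → AddSubgroup R) {S : Type w} [Ring S] (Sig : Set (SqMat R)) (f : R →+* S)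
    (γ : Γ) : Set S :=
  {x | ∃ (n : ℕ) (A : Matrix (Fin n) (Fin n) R) (α β : Fin n → Γ) (i j : Fin n)
        (B : Matrix (Fin n) (Fin n) S),
      (⟨n, A⟩ : SqMat R) ∈ Sig ∧ IsHomog 𝒜 A α β ∧ β j * (α i)⁻¹ = γ ∧
      (A.map ⇑f) * B = 1 ∧ B * (A.map ⇑f) = 1 ∧ B j i = x}

/-- gr-lower semimultiplicative set of square homogeneous matrices. -/
def IsGrLowerSemimult (𝒜 : Γ → AddSubgroup R) (Sig : Set (SqMat R)) : Prop :=
  ((⟨1, (1 : Matrix (Fin 1) (Fin 1) R)⟩ : SqMat R) ∈ Sig) ∧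
  ∀ {n m : ℕ} (A : Matrix (Fin n) (Fin n) R) (B : Matrix (Fin m) (Fin m) R)
    (α β : Fin n → Γ) (α' β' : Fin m → Γ) (C : Matrix (Fin m) (Fin n) R),
    (⟨n, A⟩ : SqMat R) ∈ Sig → (⟨m, B⟩ : SqMat R) ∈ Sig →
    IsHomog 𝒜 A α β → IsHomog 𝒜 B α' β' → IsHomog 𝒜 C α' β →
    (⟨n + m, lowerBlockSum A B C⟩ : SqMat R) ∈ Sig

end GradedDefs

/-- A homomorphism of `Γ`-graded rings from `(R, 𝒜)` to a `Γ`-graded division ring. -/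
structure GrDivRingHom (Γ : Type u) [Group Γ] [DecidableEq Γ] (R : Type v) [Ring R]
    (𝒜 : Γ → AddSubgroup R) where
  K : Type (max u v)
  [ringK : Ring K]
  [nontrivialK : Nontrivial K]
  grading : Γ → AddSubgroup K
  internal : DirectSum.IsInternal grading
  one_mem : (1 : K) ∈ grading 1
  mul_mem : ∀ {γ δ : Γ} {x y : K}, x ∈ grading γ → y ∈ grading δ → x * y ∈ grading (γ * δ)
  isUnit_of_ne : ∀ {γ : Γ} {x : K}, x ∈ grading γ → x ≠ 0 → IsUnit x
  φ : R →+* K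
  map_mem : ∀ {γ : Γ} {r : R}, r ∈ 𝒜 γ → φ r ∈ grading γ

attribute [instance] GrDivRingHom.ringK GrDivRingHom.nontrivialK

/-!
A homogeneous `A` outside the radical has no diagonal power `A^r = A ⊕ ⋯ ⊕ A` in `I`, so
Zorn's lemma gives a gr-matrix ideal `M ⊇ I` maximal among those avoiding all of them. `M` is
prime: if `B ⊕ C ∈ M` with `B, C ∉ M`, then by maximality the ideals generated by `M` with `B`
and with `C` contain some `A^r ⊕ 1` and `A^r' ⊕ 1`. Both ideals consist of determinantal sums
of generators `X ∈ M` or `B ⊕ G` (resp. `C ⊕ H`), and diagonal sums of such generators fall in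
`M` because `B ⊕ C ∈ M`; hence `A^(r + r') ⊕ 1 ∈ M`, a contradiction. Conversely a prime
matrix ideal containing `A^r` contains `A` by (PM4). Properness of `I` means that it avoids
the diagonal powers of the identity, so some prime contains `I` and the intersection consists
of homogeneous matrices.
-/

open Matrix

section FinAdd

variable {a b c d : ℕ}

@[simp] theorem Fin.natAdd_ne_castAdd (i : Fin b) (j : Fin a) :
    Fin.natAdd a i ≠ Fin.castAdd b j := by
  intro h
  have := congrArg Fin.val h
  simp at this
  omega

@[simp] theorem Fin.cast_add_assoc_castAdd_castAdd (h : a + b + c = a + (b + c)) (i : Fin a) :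
    Fin.cast h (Fin.castAdd c (Fin.castAdd b i)) = Fin.castAdd (b + c) i :=
  rfl

@[simp] theorem Fin.cast_add_assoc_castAdd_natAdd (h : a + b + c = a + (b + c)) (i : Fin b) :
    Fin.cast h (Fin.castAdd c (Fin.natAdd a i)) = Fin.natAdd a (Fin.castAdd c i) :=
  rfl

@[simp] theorem Fin.cast_add_assoc_natAdd (h : a + b + c = a + (b + c)) (i : Fin c) :
    Fin.cast h (Fin.natAdd (a + b) i) = Fin.natAdd a (Fin.natAdd b i) :=
  Fin.ext (Nat.add_assoc a b i)

def finAddCongr (e : Fin a ≃ Fin c) (f : Fin b ≃ Fin d) : Fin (a + b) ≃ Fin (c + d) :=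
  finSumFinEquiv.symm.trans ((e.sumCongr f).trans finSumFinEquiv)

@[simp] theorem finAddCongr_castAdd (e : Fin a ≃ Fin c) (f : Fin b ≃ Fin d) (i : Fin a) :
    finAddCongr e f (Fin.castAdd b i) = Fin.castAdd d (e i) := by
  simp [finAddCongr]

@[simp] theorem finAddCongr_natAdd (e : Fin a ≃ Fin c) (f : Fin b ≃ Fin d) (i : Fin b) :
    finAddCongr e f (Fin.natAdd a i) = Fin.natAdd c (f i) := by
  simp [finAddCongr]

end FinAdd

section DiagSum

variable {R : Type v} [Ring R] {m n m' n' : ℕ}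

@[simp] theorem diagSum_castAdd_castAdd (A : Matrix (Fin m) (Fin n) R)
    (B : Matrix (Fin m') (Fin n') R) (i : Fin m) (j : Fin n) :
    diagSum A B (Fin.castAdd m' i) (Fin.castAdd n' j) = A i j := by
  simp [diagSum]

@[simp] theorem diagSum_castAdd_natAdd (A : Matrix (Fin m) (Fin n) R)
    (B : Matrix (Fin m') (Fin n') R) (i : Fin m) (j : Fin n') :
    diagSum A B (Fin.castAdd m' i) (Fin.natAdd n j) = 0 := by
  simp [diagSum]

@[simp] theorem diagSum_natAdd_castAdd (A : Matrix (Fin m) (Fin n) R)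
    (B : Matrix (Fin m') (Fin n') R) (i : Fin m') (j : Fin n) :
    diagSum A B (Fin.natAdd m i) (Fin.castAdd n' j) = 0 := by
  simp [diagSum]

@[simp] theorem diagSum_natAdd_natAdd (A : Matrix (Fin m) (Fin n) R)
    (B : Matrix (Fin m') (Fin n') R) (i : Fin m') (j : Fin n') :
    diagSum A B (Fin.natAdd m i) (Fin.natAdd n j) = B i j := by
  simp [diagSum]

theorem diagSum_one_one :
    diagSum (1 : Matrix (Fin m) (Fin m) R) (1 : Matrix (Fin n) (Fin n) R) = 1 := by
  simp [diagSum, fromBlocks_one]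

theorem diagSum_fin_zero (A : Matrix (Fin m) (Fin n) R) (Z : Matrix (Fin 0) (Fin 0) R) :
    diagSum A Z = A := by
  ext i j
  obtain ⟨i | i, rfl⟩ := finSumFinEquiv.surjective i
  · obtain ⟨j | j, rfl⟩ := finSumFinEquiv.surjective j
    · exact diagSum_castAdd_castAdd A Z i j
    · exact j.elim0
  · exact i.elim0

theorem diagSum_comm (A : Matrix (Fin m) (Fin n) R) (B : Matrix (Fin m') (Fin n') R) :
    diagSum A B = (diagSum B A).submatrix finAddFlip finAddFlip := by
  ext i j
  obtain ⟨i | i, rfl⟩ := finSumFinEquiv.surjective i <;>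
    obtain ⟨j | j, rfl⟩ := finSumFinEquiv.surjective j <;>
    simp [finAddFlip_apply_castAdd, finAddFlip_apply_natAdd]

theorem diagSum_assoc {a b c : ℕ} (A : Matrix (Fin a) (Fin a) R) (B : Matrix (Fin b) (Fin b) R)
    (C : Matrix (Fin c) (Fin c) R) :
    diagSum (diagSum A B) C = (diagSum A (diagSum B C)).submatrix
      (finCongr (Nat.add_assoc a b c)) (finCongr (Nat.add_assoc a b c)) := by
  ext i j
  obtain ⟨i | i, rfl⟩ := finSumFinEquiv.surjective i <;>
    obtain ⟨j | j, rfl⟩ := finSumFinEquiv.surjective j <;>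
    (try obtain ⟨i | i, rfl⟩ := finSumFinEquiv.surjective (i : Fin (a + b))) <;>
    (try obtain ⟨j | j, rfl⟩ := finSumFinEquiv.surjective (j : Fin (a + b))) <;>
    simp

theorem diagSum_submatrix {k l : ℕ} (A : Matrix (Fin m) (Fin m) R) (B : Matrix (Fin n) (Fin n) R)
    (e f : Fin k ≃ Fin m) (e' f' : Fin l ≃ Fin n) :
    diagSum (A.submatrix e f) (B.submatrix e' f') =
      (diagSum A B).submatrix (finAddCongr e e') (finAddCongr f f') := by
  ext i j
  obtain ⟨i | i, rfl⟩ := finSumFinEquiv.surjective i <;>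
    obtain ⟨j | j, rfl⟩ := finSumFinEquiv.surjective j <;>
    simp

end DiagSum

namespace SqMat

variable {R : Type v}

def PermEquiv (p q : SqMat R) : Prop :=
  ∃ e f : Fin p.1 ≃ Fin q.1, p.2 = q.2.submatrix e f

def PermClosed (S : Set (SqMat R)) : Prop :=
  ∀ ⦃p q : SqMat R⦄, PermEquiv p q → q ∈ S → p ∈ S

namespace PermEquiv

theorem refl (p : SqMat R) : PermEquiv p p :=
  ⟨Equiv.refl _, Equiv.refl _, (submatrix_id_id _).symm⟩

theorem of_eq {n : ℕ} {A B : Matrix (Fin n) (Fin n) R} (h : A = B) :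
    PermEquiv (⟨n, A⟩ : SqMat R) ⟨n, B⟩ :=
  h ▸ refl _

theorem symm {p q : SqMat R} (h : PermEquiv p q) : PermEquiv q p := by
  obtain ⟨e, f, h⟩ := h
  exact ⟨e.symm, f.symm, by ext; simp [h]⟩

theorem trans {p q r : SqMat R} (h₁ : PermEquiv p q) (h₂ : PermEquiv q r) :
    PermEquiv p r := by
  obtain ⟨e, f, h₁⟩ := h₁
  obtain ⟨e', f', h₂⟩ := h₂
  exact ⟨e.trans e', f.trans f', by simp [h₁, h₂, submatrix_submatrix, Function.comp_def]⟩

variable [Ring R]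

theorem diagSum_congr {a b a' b' : ℕ} {A : Matrix (Fin a) (Fin a) R}
    {B : Matrix (Fin b) (Fin b) R} {A' : Matrix (Fin a') (Fin a') R}
    {B' : Matrix (Fin b') (Fin b') R}
    (hA : PermEquiv ⟨a, A⟩ ⟨a', A'⟩) (hB : PermEquiv ⟨b, B⟩ ⟨b', B'⟩) :
    PermEquiv ⟨a + b, diagSum A B⟩ ⟨a' + b', diagSum A' B'⟩ := by
  obtain ⟨e, f, hA : A = A'.submatrix e f⟩ := hA
  obtain ⟨e', f', hB : B = B'.submatrix e' f'⟩ := hB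
  rw [hA, hB]
  exact ⟨finAddCongr e e', finAddCongr f f', diagSum_submatrix A' B' e f e' f'⟩

theorem diagSum_comm {a b : ℕ} (A : Matrix (Fin a) (Fin a) R) (B : Matrix (Fin b) (Fin b) R) :
    PermEquiv ⟨a + b, diagSum A B⟩ ⟨b + a, diagSum B A⟩ :=
  ⟨finAddFlip, finAddFlip, _root_.diagSum_comm A B⟩

theorem diagSum_assoc {a b c : ℕ} (A : Matrix (Fin a) (Fin a) R)
    (B : Matrix (Fin b) (Fin b) R) (C : Matrix (Fin c) (Fin c) R) :
    PermEquiv ⟨a + b + c, diagSum (diagSum A B) C⟩ ⟨a + (b + c), diagSum A (diagSum B C)⟩ :=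
  ⟨finCongr _, finCongr _, _root_.diagSum_assoc A B C⟩

theorem diagSum_fin_zero {k : ℕ} (A : Matrix (Fin k) (Fin k) R)
    (Z : Matrix (Fin 0) (Fin 0) R) : PermEquiv ⟨k + 0, diagSum A Z⟩ ⟨k, A⟩ :=
  of_eq (_root_.diagSum_fin_zero A Z)

theorem fin_zero_diagSum {k : ℕ} (Z : Matrix (Fin 0) (Fin 0) R)
    (A : Matrix (Fin k) (Fin k) R) : PermEquiv ⟨0 + k, diagSum Z A⟩ ⟨k, A⟩ :=
  (diagSum_comm Z A).trans (diagSum_fin_zero A Z)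

theorem diagSum_diagSum_diagSum_comm {a b c d : ℕ} (P : Matrix (Fin a) (Fin a) R)
    (Q : Matrix (Fin b) (Fin b) R) (S : Matrix (Fin c) (Fin c) R)
    (T : Matrix (Fin d) (Fin d) R) :
    PermEquiv ⟨(a + b) + (c + d), diagSum (diagSum P Q) (diagSum S T)⟩
      ⟨(a + c) + (b + d), diagSum (diagSum P S) (diagSum Q T)⟩ := by
  have inner : PermEquiv ⟨b + (c + d), diagSum Q (diagSum S T)⟩
      ⟨c + (b + d), diagSum S (diagSum Q T)⟩ :=
    (diagSum_assoc Q S T).symm.trans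
      (((diagSum_comm Q S).diagSum_congr (refl ⟨d, T⟩)).trans (diagSum_assoc S Q T))
  exact (diagSum_assoc P Q _).trans
    (((refl ⟨a, P⟩).diagSum_congr inner).trans (diagSum_assoc P S _).symm)

theorem diagIter_add {n : ℕ} (A : Matrix (Fin n) (Fin n) R) (r s : ℕ) :
    PermEquiv ⟨n * (r + s), diagIter A (r + s)⟩
      ⟨n * r + n * s, diagSum (diagIter A r) (diagIter A s)⟩ := by
  induction s with
  | zero => exact (diagSum_fin_zero _ _).symm
  | succ s ih => exact (ih.diagSum_congr (refl ⟨n, A⟩)).trans (diagSum_assoc _ _ A)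

theorem diagIter_one {n : ℕ} (A : Matrix (Fin n) (Fin n) R) :
    PermEquiv ⟨n * 1, diagIter A 1⟩ ⟨n, A⟩ :=
  fin_zero_diagSum (diagIter A 0) A

theorem diagIter_one_fin_one (r : ℕ) :
    PermEquiv ⟨1 * r, diagIter (1 : Matrix (Fin 1) (Fin 1) R) r⟩ ⟨r, 1⟩ := by
  induction r with
  | zero => exact ⟨Equiv.refl _, Equiv.refl _, Matrix.ext fun i => i.elim0⟩
  | succ r ih => exact (ih.diagSum_congr (refl _)).trans (of_eq diagSum_one_one)

end PermEquiv

theorem permClosed_of_submatrix_mem {S : Set (SqMat R)}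
    (h : ∀ {n : ℕ} (A : Matrix (Fin n) (Fin n) R) (e f : Equiv.Perm (Fin n)),
      (⟨n, A⟩ : SqMat R) ∈ S → (⟨n, A.submatrix e f⟩ : SqMat R) ∈ S) :
    PermClosed S := by
  rintro ⟨m, A⟩ ⟨n, B⟩ ⟨e, f, hA : A = B.submatrix e f⟩ hB
  obtain rfl : m = n := Fin.equiv_iff_eq.mp ⟨e⟩
  exact hA ▸ h B e f hB

end SqMat

section Graded

variable {Γ : Type u} [Group Γ] {R : Type v} [Ring R] {𝒜 : Γ → AddSubgroup R}

open SqMat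

theorem IsHomog.submatrix {m n m' n' : ℕ} {A : Matrix (Fin m) (Fin n) R} {α : Fin m → Γ}
    {β : Fin n → Γ} (h : IsHomog 𝒜 A α β) (e : Fin m' → Fin m) (f : Fin n' → Fin n) :
    IsHomog 𝒜 (A.submatrix e f) (α ∘ e) (β ∘ f) :=
  fun i j => h (e i) (f j)

theorem IsHomogSq.submatrix {m n m' n' : ℕ} {A : Matrix (Fin m) (Fin n) R}
    (h : IsHomogSq 𝒜 A) (e : Fin m' → Fin m) (f : Fin n' → Fin n) :
    IsHomogSq 𝒜 (A.submatrix e f) :=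
  let ⟨α, β, h⟩ := h
  ⟨α ∘ e, β ∘ f, h.submatrix e f⟩

theorem IsHomog.diagSum {m n m' n' : ℕ} {A : Matrix (Fin m) (Fin n) R}
    {B : Matrix (Fin m') (Fin n') R} {α : Fin m → Γ} {β : Fin n → Γ} {α' : Fin m' → Γ}
    {β' : Fin n' → Γ} (hA : IsHomog 𝒜 A α β) (hB : IsHomog 𝒜 B α' β') :
    IsHomog 𝒜 (diagSum A B) (Fin.append α α') (Fin.append β β') := by
  intro i j
  obtain ⟨i | i, rfl⟩ := finSumFinEquiv.surjective i <;>
    obtain ⟨j | j, rfl⟩ := finSumFinEquiv.surjective j <;>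
    simp <;> first | exact hA i j | exact hB i j

theorem IsHomogSq.diagSum {m n m' n' : ℕ} {A : Matrix (Fin m) (Fin n) R}
    {B : Matrix (Fin m') (Fin n') R} (hA : IsHomogSq 𝒜 A) (hB : IsHomogSq 𝒜 B) :
    IsHomogSq 𝒜 (diagSum A B) :=
  let ⟨_, _, hA⟩ := hA
  let ⟨_, _, hB⟩ := hB
  ⟨_, _, hA.diagSum hB⟩

theorem IsHomogSq.of_diagSum_left {m n m' n' : ℕ} {A : Matrix (Fin m) (Fin n) R}
    {B : Matrix (Fin m') (Fin n') R} (h : IsHomogSq 𝒜 (_root_.diagSum A B)) :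
    IsHomogSq 𝒜 A := by
  obtain ⟨α, β, h⟩ := h
  exact ⟨_, _, fun i j => by simpa using h (Fin.castAdd m' i) (Fin.castAdd n' j)⟩

theorem isHomogSq_one (hone : (1 : R) ∈ 𝒜 1) (n : ℕ) :
    IsHomogSq 𝒜 (1 : Matrix (Fin n) (Fin n) R) := by
  refine ⟨fun _ => 1, fun _ => 1, fun i j => ?_⟩
  rw [one_apply]
  split_ifs
  · simpa using hone
  · exact zero_mem _

theorem isHomogSq_diagIter {n : ℕ} {A : Matrix (Fin n) (Fin n) R} (hA : IsHomogSq 𝒜 A) :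
    ∀ r, IsHomogSq 𝒜 (diagIter A r)
  | 0 => ⟨Fin.elim0, Fin.elim0, fun i => i.elim0⟩
  | r + 1 => (isHomogSq_diagIter hA r).diagSum hA

theorem SqMat.PermEquiv.isHomogSq {p q : SqMat R} (h : PermEquiv p q) (hq : IsHomogSq 𝒜 q.2) :
    IsHomogSq 𝒜 p.2 := by
  obtain ⟨e, f, h⟩ := h
  exact h ▸ hq.submatrix e f

theorem IsDetSum.submatrix {n m : ℕ} {A B C : Matrix (Fin n) (Fin n) R} (h : IsDetSum A B C)
    (e f : Fin m ≃ Fin n) :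
    IsDetSum (A.submatrix e f) (B.submatrix e f) (C.submatrix e f) := by
  rcases h with ⟨c, hAB, hC⟩ | ⟨r, hAB, hC⟩
  · refine Or.inl ⟨f.symm c, fun i j hj => hAB _ _ ?_, fun i j => ?_⟩
    · rwa [Ne, ← Equiv.eq_symm_apply]
    · simp [hC, ← Equiv.eq_symm_apply]
  · refine Or.inr ⟨e.symm r, fun i j hi => hAB _ _ ?_, fun i j => ?_⟩
    · rwa [Ne, ← Equiv.eq_symm_apply]
    · simp [hC, ← Equiv.eq_symm_apply]

theorem IsDetSum.diagSum_right {n m : ℕ} {A B C : Matrix (Fin n) (Fin n) R}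
    (h : IsDetSum A B C) (G : Matrix (Fin m) (Fin m) R) :
    IsDetSum (diagSum A G) (diagSum B G) (diagSum C G) := by
  rcases h with ⟨c, hAB, hC⟩ | ⟨r, hAB, hC⟩
  · refine Or.inl ⟨Fin.castAdd m c, fun i j hj => ?_, fun i j => ?_⟩ <;>
      obtain ⟨i | i, rfl⟩ := finSumFinEquiv.surjective i <;>
      obtain ⟨j | j, rfl⟩ := finSumFinEquiv.surjective j <;>
      simp_all
  · refine Or.inr ⟨Fin.castAdd m r, fun i j hi => ?_, fun i j => ?_⟩ <;>
      obtain ⟨i | i, rfl⟩ := finSumFinEquiv.surjective i <;>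
      obtain ⟨j | j, rfl⟩ := finSumFinEquiv.surjective j <;>
      simp_all

theorem IsDetSum.diagSum_left {n m : ℕ} {A B C : Matrix (Fin n) (Fin n) R}
    (h : IsDetSum A B C) (G : Matrix (Fin m) (Fin m) R) :
    IsDetSum (diagSum G A) (diagSum G B) (diagSum G C) := by
  simpa only [← diagSum_comm] using (h.diagSum_right G).submatrix finAddFlip finAddFlip

theorem GrDetSum.submatrix {n m : ℕ} {A B C : Matrix (Fin n) (Fin n) R}
    (h : GrDetSum 𝒜 A B C) (e f : Fin m ≃ Fin n) :
    GrDetSum 𝒜 (A.submatrix e f) (B.submatrix e f) (C.submatrix e f) :=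
  let ⟨⟨α, β, hA, hB⟩, hd⟩ := h
  ⟨⟨α ∘ e, β ∘ f, hA.submatrix e f, hB.submatrix e f⟩, hd.submatrix e f⟩

theorem GrDetSum.diagSum_right {n m : ℕ} {A B C : Matrix (Fin n) (Fin n) R}
    (h : GrDetSum 𝒜 A B C) {G : Matrix (Fin m) (Fin m) R} (hG : IsHomogSq 𝒜 G) :
    GrDetSum 𝒜 (diagSum A G) (diagSum B G) (diagSum C G) :=
  let ⟨⟨_, _, hA, hB⟩, hd⟩ := h
  let ⟨_, _, hG⟩ := hG
  ⟨⟨_, _, hA.diagSum hG, hB.diagSum hG⟩, hd.diagSum_right G⟩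

theorem GrDetSum.diagSum_left {n m : ℕ} {A B C : Matrix (Fin n) (Fin n) R}
    (h : GrDetSum 𝒜 A B C) {G : Matrix (Fin m) (Fin m) R} (hG : IsHomogSq 𝒜 G) :
    GrDetSum 𝒜 (diagSum G A) (diagSum G B) (diagSum G C) :=
  let ⟨⟨_, _, hA, hB⟩, hd⟩ := h
  let ⟨_, _, hG⟩ := hG
  ⟨⟨_, _, hG.diagSum hA, hG.diagSum hB⟩, hd.diagSum_left G⟩

theorem GrDetSum.isHomogSq {n : ℕ} {A B C : Matrix (Fin n) (Fin n) R}
    (h : GrDetSum 𝒜 A B C) : IsHomogSq 𝒜 C := by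
  obtain ⟨⟨α, β, hA, hB⟩, hd⟩ := h
  refine ⟨α, β, fun i j => ?_⟩
  rcases hd with ⟨_, _, hC⟩ | ⟨_, _, hC⟩ <;> rw [hC] <;> split_ifs
  all_goals first | exact add_mem (hA i j) (hB i j) | exact hA i j

end Graded

section MatrixIdeal

variable {Γ : Type u} [Group Γ] {R : Type v} [Ring R] {𝒜 : Γ → AddSubgroup R}

open SqMat

theorem IsGrMatrixIdeal.permClosed {J : Set (SqMat R)} (hJ : IsGrMatrixIdeal 𝒜 J) :
    PermClosed J :=
  permClosed_of_submatrix_mem hJ.i4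

theorem IsGrPrimeMatrixIdeal.permClosed {P : Set (SqMat R)} (hP : IsGrPrimeMatrixIdeal 𝒜 P) :
    PermClosed P :=
  permClosed_of_submatrix_mem hP.pm6

theorem IsGrMatrixIdeal.mem_of_diagSum_one_mem {J : Set (SqMat R)} (hJ : IsGrMatrixIdeal 𝒜 J)
    {k s : ℕ} {X : Matrix (Fin k) (Fin k) R}
    (h : (⟨k + s, diagSum X (1 : Matrix (Fin s) (Fin s) R)⟩ : SqMat R) ∈ J) :
    (⟨k, X⟩ : SqMat R) ∈ J := by
  induction s with
  | zero => exact hJ.permClosed (PermEquiv.diagSum_fin_zero X 1).symm h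
  | succ s ih =>
    refine ih (hJ.i5 _ (hJ.permClosed ?_ h))
    exact (PermEquiv.diagSum_assoc X 1 1).trans
      (PermEquiv.of_eq (congrArg (diagSum X) diagSum_one_one))

/-- Stripping the identity down to the empty matrix, a neutral element for `⊕`. -/
theorem IsGrMatrixIdeal.mem_of_one_mem {J : Set (SqMat R)} (hJ : IsGrMatrixIdeal 𝒜 J) {s : ℕ}
    (h1 : (⟨s, (1 : Matrix (Fin s) (Fin s) R)⟩ : SqMat R) ∈ J) {m : ℕ}
    {Q : Matrix (Fin m) (Fin m) R} (hQ : IsHomogSq 𝒜 Q) : (⟨m, Q⟩ : SqMat R) ∈ J := by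
  have hempty : (⟨0, (0 : Matrix (Fin 0) (Fin 0) R)⟩ : SqMat R) ∈ J :=
    hJ.mem_of_diagSum_one_mem (hJ.permClosed (PermEquiv.fin_zero_diagSum 0 1) h1)
  exact hJ.permClosed (PermEquiv.fin_zero_diagSum 0 Q).symm (hJ.i3 _ Q hempty hQ)

theorem IsGrPrimeMatrixIdeal.mem_of_diagIter_mem {P : Set (SqMat R)}
    (hP : IsGrPrimeMatrixIdeal 𝒜 P) {n : ℕ} {A : Matrix (Fin n) (Fin n) R}
    (hA : IsHomogSq 𝒜 A) {r : ℕ} (hr : 1 ≤ r)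
    (h : (⟨n * r, diagIter A r⟩ : SqMat R) ∈ P) : (⟨n, A⟩ : SqMat R) ∈ P := by
  induction r with
  | zero => omega
  | succ r ih =>
    rcases Nat.eq_zero_or_pos r with rfl | hr
    · exact hP.permClosed (PermEquiv.diagIter_one A).symm h
    · exact (hP.pm4 _ _ (isHomogSq_diagIter hA r) hA h).elim (ih hr) id

theorem isGrMatrixIdeal_sUnion {c : Set (Set (SqMat R))} (hc : ∀ J ∈ c, IsGrMatrixIdeal 𝒜 J)
    (hchain : IsChain (· ⊆ ·) c) (hne : c.Nonempty) : IsGrMatrixIdeal 𝒜 (⋃₀ c) where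
  subset_homog := by
    rintro p ⟨J, hJ, hp⟩
    exact (hc J hJ).subset_homog p hp
  i1 A hA hfull :=
    let ⟨J, hJ⟩ := hne
    ⟨J, hJ, (hc J hJ).i1 A hA hfull⟩
  i2 := by
    rintro n A B C ⟨J₁, hJ₁, hA⟩ ⟨J₂, hJ₂, hB⟩ hd
    rcases hchain.total hJ₁ hJ₂ with h | h
    · exact ⟨J₂, hJ₂, (hc J₂ hJ₂).i2 A B C (h hA) hB hd⟩
    · exact ⟨J₁, hJ₁, (hc J₁ hJ₁).i2 A B C hA (h hB) hd⟩
  i3 := by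
    rintro m n A B ⟨J, hJ, hA⟩ hB
    exact ⟨J, hJ, (hc J hJ).i3 A B hA hB⟩
  i4 := by
    rintro n A e f ⟨J, hJ, hA⟩
    exact ⟨J, hJ, (hc J hJ).i4 A e f hA⟩
  i5 := by
    rintro n A ⟨J, hJ, hA⟩
    exact ⟨J, hJ, (hc J hJ).i5 A hA⟩

section IsDetSumOf

variable {W : Set (SqMat R)}

theorem IsDetSumOf.isHomogSq (hW : ∀ p ∈ W, IsHomogSq 𝒜 p.2) {p : SqMat R}
    (h : IsDetSumOf 𝒜 W p) : IsHomogSq 𝒜 p.2 := by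
  induction h with
  | base p hp => exact hW p hp
  | step _ _ _ _ _ hd => exact hd.isHomogSq

theorem IsDetSumOf.of_permEquiv (hW : PermClosed W) {p q : SqMat R} (hq : IsDetSumOf 𝒜 W q)
    (h : PermEquiv p q) : IsDetSumOf 𝒜 W p := by
  induction hq generalizing p with
  | base q hq => exact .base p (hW h hq)
  | step A B C _ _ hd ihA ihB =>
    obtain ⟨k, X⟩ := p
    obtain ⟨e, f, hX : X = C.submatrix e f⟩ := h
    rw [hX]
    exact .step (A.submatrix e f) (B.submatrix e f) _ (ihA ⟨e, f, rfl⟩) (ihB ⟨e, f, rfl⟩)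
      (hd.submatrix e f)

theorem IsDetSumOf.diagSum_right
    (hW : ∀ p ∈ W, ∀ {m : ℕ} (G : Matrix (Fin m) (Fin m) R), IsHomogSq 𝒜 G →
      (⟨p.1 + m, diagSum p.2 G⟩ : SqMat R) ∈ W)
    {q : SqMat R} (hq : IsDetSumOf 𝒜 W q) {m : ℕ} {G : Matrix (Fin m) (Fin m) R}
    (hG : IsHomogSq 𝒜 G) : IsDetSumOf 𝒜 W ⟨q.1 + m, diagSum q.2 G⟩ := by
  induction hq with
  | base p hp => exact .base _ (hW p hp G hG)
  | step _ _ _ _ _ hd ihA ihB => exact .step _ _ _ ihA ihB (hd.diagSum_right hG)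

theorem IsGrMatrixIdeal.diagSum_mem_of_isDetSumOf_right {J : Set (SqMat R)}
    (hJ : IsGrMatrixIdeal 𝒜 J) {p : SqMat R} (hp : IsHomogSq 𝒜 p.2)
    (h : ∀ q ∈ W, (⟨p.1 + q.1, diagSum p.2 q.2⟩ : SqMat R) ∈ J) {q : SqMat R}
    (hq : IsDetSumOf 𝒜 W q) : (⟨p.1 + q.1, diagSum p.2 q.2⟩ : SqMat R) ∈ J := by
  induction hq with
  | base q hq => exact h q hq
  | step _ _ _ _ _ hd ihA ihB => exact hJ.i2 _ _ _ ihA ihB (hd.diagSum_left hp)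

theorem IsGrMatrixIdeal.diagSum_mem_of_isDetSumOf_left {J : Set (SqMat R)}
    (hJ : IsGrMatrixIdeal 𝒜 J) {q : SqMat R} (hq : IsHomogSq 𝒜 q.2)
    (h : ∀ p ∈ W, (⟨p.1 + q.1, diagSum p.2 q.2⟩ : SqMat R) ∈ J) {p : SqMat R}
    (hp : IsDetSumOf 𝒜 W p) : (⟨p.1 + q.1, diagSum p.2 q.2⟩ : SqMat R) ∈ J := by
  induction hp with
  | base p hp => exact h p hp
  | step _ _ _ _ _ hd ihA ihB => exact hJ.i2 _ _ _ ihA ihB (hd.diagSum_right hq)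

end IsDetSumOf

end MatrixIdeal

namespace GrMatrixIdeal

variable {Γ : Type u} [Group Γ] {R : Type v} [Ring R] {𝒜 : Γ → AddSubgroup R}
  {J : Set (SqMat R)} {n : ℕ} {B : Matrix (Fin n) (Fin n) R}

open SqMat

def adjoinGens (𝒜 : Γ → AddSubgroup R) (J : Set (SqMat R)) (B : Matrix (Fin n) (Fin n) R) :
    Set (SqMat R) :=
  J ∪ {p | ∃ (m : ℕ) (G : Matrix (Fin m) (Fin m) R), IsHomogSq 𝒜 G ∧
    PermEquiv p ⟨n + m, diagSum B G⟩}

/-- Cohn's construction of the gr-matrix ideal generated by `J` and `B`. -/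
def adjoin (𝒜 : Γ → AddSubgroup R) (J : Set (SqMat R)) (B : Matrix (Fin n) (Fin n) R) :
    Set (SqMat R) :=
  {p | ∃ s : ℕ, IsDetSumOf 𝒜 (adjoinGens 𝒜 J B)
    ⟨p.1 + s, diagSum p.2 (1 : Matrix (Fin s) (Fin s) R)⟩}

theorem permClosed_adjoinGens (hJ : IsGrMatrixIdeal 𝒜 J) : PermClosed (adjoinGens 𝒜 J B) := by
  rintro p q h (hq | ⟨m, G, hG, hq⟩)
  · exact .inl (hJ.permClosed h hq)
  · exact .inr ⟨m, G, hG, h.trans hq⟩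

theorem isHomogSq_of_mem_adjoinGens (hJ : IsGrMatrixIdeal 𝒜 J) (hB : IsHomogSq 𝒜 B) :
    ∀ p ∈ adjoinGens 𝒜 J B, IsHomogSq 𝒜 p.2 := by
  rintro p (hp | ⟨m, G, hG, hp⟩)
  · exact hJ.subset_homog p hp
  · exact PermEquiv.isHomogSq hp (hB.diagSum hG)

theorem diagSum_mem_adjoinGens (hJ : IsGrMatrixIdeal 𝒜 J) :
    ∀ p ∈ adjoinGens 𝒜 J B, ∀ {m : ℕ} (G : Matrix (Fin m) (Fin m) R),
      IsHomogSq 𝒜 G → (⟨p.1 + m, diagSum p.2 G⟩ : SqMat R) ∈ adjoinGens 𝒜 J B := by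
  rintro p (hp | ⟨m', G', hG', hp⟩) m G hG
  · exact .inl (hJ.i3 p.2 G hp hG)
  · exact .inr ⟨m' + m, diagSum G' G, hG'.diagSum hG,
      (hp.diagSum_congr (.refl ⟨m, G⟩)).trans (PermEquiv.diagSum_assoc B G' G)⟩

theorem isDetSumOf_adjoinGens_diagSum (hJ : IsGrMatrixIdeal 𝒜 J) {q : SqMat R}
    (hq : IsDetSumOf 𝒜 (adjoinGens 𝒜 J B) q) {m : ℕ} {G : Matrix (Fin m) (Fin m) R}
    (hG : IsHomogSq 𝒜 G) : IsDetSumOf 𝒜 (adjoinGens 𝒜 J B) ⟨q.1 + m, diagSum q.2 G⟩ :=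
  hq.diagSum_right (diagSum_mem_adjoinGens hJ) hG

theorem isDetSumOf_adjoinGens_of_permEquiv (hJ : IsGrMatrixIdeal 𝒜 J) {p q : SqMat R}
    (hq : IsDetSumOf 𝒜 (adjoinGens 𝒜 J B) q) (h : PermEquiv p q) :
    IsDetSumOf 𝒜 (adjoinGens 𝒜 J B) p :=
  hq.of_permEquiv (permClosed_adjoinGens hJ) h

theorem isDetSumOf_diagSum_one_mono (hJ : IsGrMatrixIdeal 𝒜 J) (hone : (1 : R) ∈ 𝒜 1)
    {k s t : ℕ} {X : Matrix (Fin k) (Fin k) R}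
    (h : IsDetSumOf 𝒜 (adjoinGens 𝒜 J B) ⟨k + s, diagSum X (1 : Matrix (Fin s) (Fin s) R)⟩)
    (hst : s ≤ t) :
    IsDetSumOf 𝒜 (adjoinGens 𝒜 J B) ⟨k + t, diagSum X (1 : Matrix (Fin t) (Fin t) R)⟩ := by
  obtain ⟨t, rfl⟩ := Nat.exists_eq_add_of_le hst
  refine isDetSumOf_adjoinGens_of_permEquiv hJ
    (isDetSumOf_adjoinGens_diagSum hJ h (isHomogSq_one hone t)) ?_
  exact (PermEquiv.of_eq (congrArg (diagSum X) diagSum_one_one.symm)).trans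
    (PermEquiv.diagSum_assoc X 1 1).symm

theorem isGrMatrixIdeal_adjoin (hJ : IsGrMatrixIdeal 𝒜 J) (hone : (1 : R) ∈ 𝒜 1)
    (hB : IsHomogSq 𝒜 B) : IsGrMatrixIdeal 𝒜 (adjoin 𝒜 J B) where
  subset_homog := by
    rintro p ⟨s, hs⟩
    exact (hs.isHomogSq (isHomogSq_of_mem_adjoinGens hJ hB)).of_diagSum_left
  i1 X hX hfull :=
    ⟨0, isDetSumOf_adjoinGens_of_permEquiv hJ (.base _ (.inl (hJ.i1 X hX hfull)))
      (PermEquiv.diagSum_fin_zero X 1)⟩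
  i2 := by
    rintro k X Y Z ⟨s, hs⟩ ⟨t, ht⟩ hd
    exact ⟨s + t, .step _ _ _
      (isDetSumOf_diagSum_one_mono hJ hone hs (Nat.le_add_right s t))
      (isDetSumOf_diagSum_one_mono hJ hone ht (Nat.le_add_left t s))
      (hd.diagSum_right (isHomogSq_one hone (s + t)))⟩
  i3 := by
    rintro k m X G ⟨s, hs⟩ hG
    refine ⟨s, isDetSumOf_adjoinGens_of_permEquiv hJ
      (isDetSumOf_adjoinGens_diagSum hJ hs hG) ?_⟩
    exact (PermEquiv.diagSum_assoc X G 1).trans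
      (((PermEquiv.refl ⟨k, X⟩).diagSum_congr (PermEquiv.diagSum_comm G 1)).trans
        (PermEquiv.diagSum_assoc X 1 G).symm)
  i4 := by
    rintro k X e f ⟨s, hs⟩
    exact ⟨s, isDetSumOf_adjoinGens_of_permEquiv hJ hs
      (PermEquiv.diagSum_congr ⟨e, f, rfl⟩ (.refl ⟨s, 1⟩))⟩
  i5 := by
    rintro k X ⟨s, hs⟩
    refine ⟨1 + s, isDetSumOf_adjoinGens_of_permEquiv hJ hs ?_⟩
    exact (PermEquiv.of_eq (congrArg (diagSum X) diagSum_one_one.symm)).trans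
      (PermEquiv.diagSum_assoc X 1 1).symm

theorem subset_adjoin (hJ : IsGrMatrixIdeal 𝒜 J) : J ⊆ adjoin 𝒜 J B := by
  rintro ⟨k, X⟩ hX
  exact ⟨0, isDetSumOf_adjoinGens_of_permEquiv hJ (.base _ (.inl hX))
    (PermEquiv.diagSum_fin_zero X 1)⟩

theorem mem_adjoin_self : (⟨n, B⟩ : SqMat R) ∈ adjoin 𝒜 J B :=
  ⟨0, .base _ (.inr ⟨0, 1, ⟨Fin.elim0, Fin.elim0, fun i => i.elim0⟩, .refl _⟩)⟩

theorem diagSum_mem_of_isDetSumOf_adjoinGens (hJ : IsGrMatrixIdeal 𝒜 J) {m : ℕ}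
    {C : Matrix (Fin m) (Fin m) R} (hB : IsHomogSq 𝒜 B) (hC : IsHomogSq 𝒜 C)
    (hBC : (⟨n + m, diagSum B C⟩ : SqMat R) ∈ J) {p q : SqMat R}
    (hp : IsDetSumOf 𝒜 (adjoinGens 𝒜 J B) p) (hq : IsDetSumOf 𝒜 (adjoinGens 𝒜 J C) q) :
    (⟨p.1 + q.1, diagSum p.2 q.2⟩ : SqMat R) ∈ J := by
  refine hJ.diagSum_mem_of_isDetSumOf_left
    (hq.isHomogSq (isHomogSq_of_mem_adjoinGens hJ hC)) (fun p hp' => ?_) hp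
  have hph := isHomogSq_of_mem_adjoinGens hJ hB p hp'
  refine hJ.diagSum_mem_of_isDetSumOf_right hph (fun q hq' => ?_) hq
  have hqh := isHomogSq_of_mem_adjoinGens hJ hC q hq'
  rcases hp' with hp' | ⟨g, G, hG, hpG⟩
  · exact hJ.i3 p.2 q.2 hp' hqh
  rcases hq' with hq' | ⟨h, H, hH, hqH⟩
  · exact hJ.permClosed (PermEquiv.diagSum_comm p.2 q.2) (hJ.i3 q.2 p.2 hq' hph)
  · exact hJ.permClosed
      ((hpG.diagSum_congr hqH).trans (PermEquiv.diagSum_diagSum_diagSum_comm B G C H))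
      (hJ.i3 _ _ hBC (hG.diagSum hH))

end GrMatrixIdeal

section Prime

variable {Γ : Type u} [Group Γ] {R : Type v} [Ring R] {𝒜 : Γ → AddSubgroup R}

open SqMat GrMatrixIdeal

def AvoidsDiagIter (J : Set (SqMat R)) {n : ℕ} (A : Matrix (Fin n) (Fin n) R) : Prop :=
  ∀ r, 1 ≤ r → (⟨n * r, diagIter A r⟩ : SqMat R) ∉ J

theorem IsGrMatrixIdeal.avoidsDiagIter_one {I : Set (SqMat R)} (hI : IsGrMatrixIdeal 𝒜 I)
    (hproper : I ≠ {p : SqMat R | IsHomogSq 𝒜 p.2}) :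
    AvoidsDiagIter I (1 : Matrix (Fin 1) (Fin 1) R) := by
  intro r _ h
  refine hproper (Set.Subset.antisymm (fun p hp => hI.subset_homog p hp) fun q hq => ?_)
  exact hI.mem_of_one_mem (hI.permClosed (PermEquiv.diagIter_one_fin_one r).symm h) hq

variable {M : Set (SqMat R)} {n : ℕ} {A : Matrix (Fin n) (Fin n) R}

theorem exists_diagIter_mem_adjoin_of_maximal (hone : (1 : R) ∈ 𝒜 1)
    (hM : Maximal (fun J => IsGrMatrixIdeal 𝒜 J ∧ AvoidsDiagIter J A) M) {m : ℕ}
    {B : Matrix (Fin m) (Fin m) R} (hB : IsHomogSq 𝒜 B) (hBM : (⟨m, B⟩ : SqMat R) ∉ M) :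
    ∃ r, 1 ≤ r ∧ (⟨n * r, diagIter A r⟩ : SqMat R) ∈ adjoin 𝒜 M B := by
  by_contra! h
  exact hBM (hM.2 ⟨isGrMatrixIdeal_adjoin hM.1.1 hone hB, h⟩ (subset_adjoin hM.1.1)
    mem_adjoin_self)

theorem isGrPrimeMatrixIdeal_of_maximal (hone : (1 : R) ∈ 𝒜 1) (hA : IsHomogSq 𝒜 A)
    (hM : Maximal (fun J => IsGrMatrixIdeal 𝒜 J ∧ AvoidsDiagIter J A) M) :
    IsGrPrimeMatrixIdeal 𝒜 M := by
  obtain ⟨hMideal, hMavoid⟩ := hM.1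
  refine ⟨hMideal.subset_homog, hMideal.i1, hMideal.i2, hMideal.i3, ?_, ?_, hMideal.i4⟩
  · intro m₁ m₂ B C hB hC hBC
    by_contra! hnot
    obtain ⟨r, hr, s, hs⟩ := exists_diagIter_mem_adjoin_of_maximal hone hM hB hnot.1
    obtain ⟨r', -, t, ht⟩ := exists_diagIter_mem_adjoin_of_maximal hone hM hC hnot.2
    have hmem := diagSum_mem_of_isDetSumOf_adjoinGens hMideal hB hC hBC hs ht
    refine hMavoid (r + r') (by omega) (hMideal.mem_of_diagSum_one_mem (s := s + t) ?_)
    refine hMideal.permClosed ?_ hmem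
    exact ((PermEquiv.diagIter_add A r r').diagSum_congr
      (PermEquiv.of_eq diagSum_one_one.symm)).trans
      (PermEquiv.diagSum_diagSum_diagSum_comm _ _ _ _)
  · intro h1
    exact hMavoid 1 le_rfl (hMideal.mem_of_one_mem h1 (isHomogSq_diagIter hA 1))

theorem exists_isGrPrimeMatrixIdeal_of_avoidsDiagIter (hone : (1 : R) ∈ 𝒜 1)
    {I : Set (SqMat R)} (hI : IsGrMatrixIdeal 𝒜 I) (hA : IsHomogSq 𝒜 A)
    (havoid : AvoidsDiagIter I A) :
    ∃ P, IsGrPrimeMatrixIdeal 𝒜 P ∧ I ⊆ P ∧ (⟨n, A⟩ : SqMat R) ∉ P := by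
  obtain ⟨M, hIM, hM⟩ :=
    zorn_subset_nonempty {J | IsGrMatrixIdeal 𝒜 J ∧ AvoidsDiagIter J A}
    (fun c hc hchain hne => ⟨⋃₀ c,
      ⟨isGrMatrixIdeal_sUnion (fun J hJ => (hc hJ).1) hchain hne,
        fun r hr ⟨J, hJ, hmem⟩ => (hc hJ).2 r hr hmem⟩,
      fun _ => Set.subset_sUnion_of_mem⟩) I ⟨hI, havoid⟩
  exact ⟨M, isGrPrimeMatrixIdeal_of_maximal hone hA hM, hIM,
    fun hAM => hM.1.2 1 le_rfl (hM.1.1.permClosed (PermEquiv.diagIter_one A) hAM)⟩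

end Prime

theorem gr_radical_eq_sInter_primes_general
    {Γ : Type u} [Group Γ] {R : Type v} [Ring R]
    (𝒜 : Γ → AddSubgroup R)
    (hone : (1 : R) ∈ 𝒜 1)
    (I : Set (SqMat R)) (hI : IsGrMatrixIdeal 𝒜 I)
    (hproper : I ≠ {p : SqMat R | IsHomogSq 𝒜 p.2}) :
    {p : SqMat R | IsHomogSq 𝒜 p.2 ∧
        ∃ r : ℕ, 1 ≤ r ∧ (⟨p.1 * r, diagIter p.2 r⟩ : SqMat R) ∈ I} =
      ⋂₀ {P : Set (SqMat R) | IsGrPrimeMatrixIdeal 𝒜 P ∧ I ⊆ P} := by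
  ext p
  simp only [Set.mem_ofPred_eq, Set.mem_sInter]
  constructor
  · rintro ⟨hp, r, hr, hmem⟩ P ⟨hP, hIP⟩
    exact hP.mem_of_diagIter_mem hp hr (hIP hmem)
  · intro h
    have hp : IsHomogSq 𝒜 p.2 := by
      obtain ⟨P, hP, hIP, -⟩ := exists_isGrPrimeMatrixIdeal_of_avoidsDiagIter hone hI
        (isHomogSq_one hone 1) (hI.avoidsDiagIter_one hproper)
      exact hP.subset_homog p (h P ⟨hP, hIP⟩)
    refine ⟨hp, ?_⟩
    by_contra! hno
    obtain ⟨P, hP, hIP, hpP⟩ := exists_isGrPrimeMatrixIdeal_of_avoidsDiagIter hone hI hp hno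
    exact hpP (h P ⟨hP, hIP⟩)

/-- Let `I` be a proper gr-matrix ideal of the `Γ`-graded ring `R`.
Then the radical `√I = {A ∈ 𝔐(R) : ⊕^r A ∈ I for some r ≥ 1}` equals the
intersection of all gr-prime matrix ideals containing `I`. -/
theorem gr_radical_eq_sInter_primes
    {Γ : Type u} [Group Γ] [DecidableEq Γ] {R : Type v} [Ring R]
    (𝒜 : Γ → AddSubgroup R)
    (hinternal : DirectSum.IsInternal 𝒜)
    (hone : (1 : R) ∈ 𝒜 1)
    (hmul : ∀ {γ δ : Γ} {x y : R}, x ∈ 𝒜 γ → y ∈ 𝒜 δ → x * y ∈ 𝒜 (γ * δ))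
    (I : Set (SqMat R)) (hI : IsGrMatrixIdeal 𝒜 I)
    (hproper : I ≠ {p : SqMat R | IsHomogSq 𝒜 p.2}) :
    {p : SqMat R | IsHomogSq 𝒜 p.2 ∧
        ∃ r : ℕ, 1 ≤ r ∧ (⟨p.1 * r, diagIter p.2 r⟩ : SqMat R) ∈ I} =
      ⋂₀ {P : Set (SqMat R) | IsGrPrimeMatrixIdeal 𝒜 P ∧ I ⊆ P} :=
  gr_radical_eq_sInter_primes_general 𝒜 hone I hI hproper
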